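/- arXiv:2207.07893 — 4 statements merged into one kernel-verified Lean document; each statement's English description precedes it below -/
import Mathlib

section
/- Let g : [0,∞) → (0,∞) be a strictly positive, left-continuous function with ∫₀ᵗ 1/g(s) ds < ∞ for every t > 0, and let Γ solve Γ(t) = ∫₀ᵗ g(Γ(s)) ds. Then Γ is strictly increasing on [0,∞). -/
open MeasureTheory intervalIntegral Set

/-- If `g : [0,∞) → (0,∞)` is strictly positive, left-continuous, with
`∫₀ᵗ 1/g(s) ds < ∞` for every `t > 0`, and `Γ` solves
`Γ(t) = ∫₀ᵗ g(Γ(s)) ds`, then `Γ` is strictly increasing on `[0,∞)`. -/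
theorem stmt0 (g : ℝ → ℝ) (Γ : ℝ → ℝ)
    (hg_pos : ∀ s, 0 ≤ s → 0 < g s)
    (hg_left : ∀ s, 0 < s → ContinuousWithinAt g (Set.Iic s) s)
    (hg_int : ∀ t, 0 < t → IntervalIntegrable (fun s => 1 / g s) volume 0 t)
    (hΓ_int : ∀ t, 0 ≤ t → IntervalIntegrable (fun s => g (Γ s)) volume 0 t)
    (hΓ : ∀ t, 0 ≤ t → Γ t = ∫ s in (0:ℝ)..t, g (Γ s))
    (hΓ_nonneg : ∀ t, 0 ≤ t → 0 ≤ Γ t) :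
    StrictMonoOn Γ (Set.Ici (0:ℝ)) := by
  intro a ha b hb hab
  have ha0 : (0:ℝ) ≤ a := ha
  have hb0 : (0:ℝ) ≤ b := hb
  have hInt_ab : IntervalIntegrable (fun s => g (Γ s)) volume a b := by
    apply (hΓ_int b hb0).mono_set
    rw [Set.uIcc_of_le hab.le, Set.uIcc_of_le hb0]
    exact Set.Icc_subset_Icc ha0 le_rfl
  have hpos : 0 < ∫ s in a..b, g (Γ s) :=
    intervalIntegral.intervalIntegral_pos_of_pos_on hInt_ab
      (fun x hx => hg_pos _ (hΓ_nonneg x (ha0.trans hx.1.le))) hab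
  have hsplit : ∫ s in (0:ℝ)..b, g (Γ s) =
      (∫ s in (0:ℝ)..a, g (Γ s)) + ∫ s in a..b, g (Γ s) :=
    (intervalIntegral.integral_add_adjacent_intervals (hΓ_int a ha0) hInt_ab).symm
  have := hΓ a ha0
  have := hΓ b hb0
  linarith
end

section
/- Let g : [0,∞) → (0,∞) be strictly positive and left-continuous, and suppose Γ : [0,∞) → [0,∞) is continuous, Γ(0)=0, and satisfies Γ(t) = ∫₀ᵗ g(Γ(s)) ds. Then Γ is a bijection from [0,∞) onto its range, and its inverse satisfies Γ⁻¹(t) = ∫₀ᵗ 1/g(s) ds for all t in the range of Γ. -/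
/-!
Since `g > 0`, `Γ` is strictly increasing, hence injective, and the fundamental theorem of calculus
gives `Γ` the left derivative `g (Γ x)` at every `x > 0` (left continuity of `g` is exactly what
makes `g ∘ Γ` left continuous). The inverse of `Γ` on `[0, u]` is continuous and, by the inverse
function theorem, has the nonnegative left derivative `1 / g` on `(0, Γ u)`. A nonnegative one-sided
derivative is automatically integrable, so the fundamental theorem of calculus applies to the
inverse and yields `∫₀^{Γ u} 1 / g = u`.
-/

open MeasureTheory intervalIntegral Set

open Filter Topology Function

theorem integral_eq_sub_of_hasDeriv_left_of_nonneg {f f' : ℝ → ℝ} {a b : ℝ} (hab : a ≤ b)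
    (hcont : ContinuousOn f (Icc a b))
    (hderiv : ∀ x ∈ Ioo a b, HasDerivWithinAt f (f' x) (Iio x) x)
    (hf' : ∀ x ∈ Ioo a b, 0 ≤ f' x) :
    ∫ x in a..b, f' x = f b - f a := by
  -- reflect `x ↦ -x` to turn left derivatives into right ones; nonnegativity gives integrability
  have hneg : ∀ y ∈ Ioo (-b) (-a), -y ∈ Ioo a b :=
    fun y hy => ⟨by linarith [hy.2], by linarith [hy.1]⟩
  have hcont' : ContinuousOn (fun y => -f (-y)) (Icc (-b) (-a)) :=
    (hcont.comp continuousOn_neg fun y hy => ⟨by linarith [hy.2], by linarith [hy.1]⟩).neg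
  have hderiv' : ∀ y ∈ Ioo (-b) (-a), HasDerivWithinAt (fun y => -f (-y)) (f' (-y)) (Ioi y) y := by
    intro y hy
    have hmaps : MapsTo Neg.neg (Ioi y) (Iio (-y)) := fun _ hz => neg_lt_neg (mem_Ioi.1 hz)
    have := ((hderiv (-y) (hneg y hy)).comp y (hasDerivAt_neg y).hasDerivWithinAt hmaps).neg
    rwa [mul_neg_one, neg_neg] at this
  have hint : IntervalIntegrable (fun y => f' (-y)) volume (-b) (-a) :=
    (intervalIntegrable_iff_integrableOn_Ioc_of_le (by linarith)).2
      (integrableOn_deriv_right_of_nonneg hcont' hderiv' fun y hy => hf' _ (hneg y hy))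
  rw [← neg_neg a, ← neg_neg b, ← integral_comp_neg,
    integral_eq_sub_of_hasDeriv_right_of_le (by linarith) hcont' hderiv' hint]
  simp only [neg_neg]
  ring

theorem MonotoneOn.continuousOn_Icc_of_surjOn {f : ℝ → ℝ} {a b c d : ℝ}
    (hf : MonotoneOn f (Icc a b)) (hmaps : MapsTo f (Icc a b) (Icc c d))
    (hsurj : SurjOn f (Icc a b) (Icc c d)) : ContinuousOn f (Icc a b) := by
  rw [continuousOn_iff_continuous_domRestrict]
  have hres : Continuous (hmaps.restrict f _ _) :=
    Monotone.continuous_of_surjective (fun x y hxy => hf x.2 y.2 hxy) (by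
      rintro ⟨y, hy⟩
      obtain ⟨x, hx, rfl⟩ := hsurj hy
      exact ⟨⟨x, hx⟩, rfl⟩)
  exact continuous_subtype_val.comp hres

theorem HasDerivWithinAt.of_local_left_inverse {f g : ℝ → ℝ} {f' a : ℝ} {s t : Set ℝ}
    (hg : Tendsto g (𝓝[s] a) (𝓝[t] (g a))) (hf : HasDerivWithinAt f f' t (g a)) (hf' : f' ≠ 0)
    (ha : a ∈ s) (hfg : ∀ᶠ y in 𝓝[s] a, f (g y) = y) : HasDerivWithinAt g f'⁻¹ s a :=
  HasFDerivWithinAt.of_local_left_inverse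
    (f' := ContinuousLinearEquiv.unitsEquivAut ℝ (Units.mk0 f' hf')) hg hf ha hfg

section InverseOfStrictMono

variable {f : ℝ → ℝ} {a b : ℝ}

theorem StrictMonoOn.bijOn_Icc (hab : a ≤ b) (hf : StrictMonoOn f (Icc a b))
    (hc : ContinuousOn f (Icc a b)) : BijOn f (Icc a b) (Icc (f a) (f b)) :=
  ⟨hf.monotoneOn.mapsTo_Icc, hf.injOn, intermediate_value_Icc hab hc⟩

theorem StrictMonoOn.continuousOn_invFunOn_Icc (hab : a ≤ b) (hf : StrictMonoOn f (Icc a b))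
    (hc : ContinuousOn f (Icc a b)) :
    ContinuousOn (invFunOn f (Icc a b)) (Icc (f a) (f b)) := by
  have hinv := (hf.bijOn_Icc hab hc).invOn_invFunOn
  have hbij := hinv.symm.bijOn (hf.bijOn_Icc hab hc).surjOn.mapsTo_invFunOn
    (hf.bijOn_Icc hab hc).mapsTo
  refine MonotoneOn.continuousOn_Icc_of_surjOn (fun y hy z hz hyz => ?_) hbij.mapsTo hbij.surjOn
  rwa [← hf.le_iff_le (hbij.mapsTo hy) (hbij.mapsTo hz), hinv.2 hy, hinv.2 hz]

theorem StrictMonoOn.hasDerivWithinAt_invFunOn_Icc (hf : StrictMonoOn f (Icc a b))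
    (hc : ContinuousOn f (Icc a b)) {x f' : ℝ} (hx : x ∈ Ioc a b)
    (hderiv : HasDerivWithinAt f f' (Iic x) x) (hf' : f' ≠ 0) :
    HasDerivWithinAt (invFunOn f (Icc a b)) f'⁻¹ (Iic (f x)) (f x) := by
  have hab : a ≤ b := hx.1.le.trans hx.2
  have hxab : x ∈ Icc a b := Ioc_subset_Icc_self hx
  have hleft : invFunOn f (Icc a b) (f x) = x := hf.injOn.leftInvOn_invFunOn hxab
  have hsub : Icc (f a) (f x) ⊆ Icc (f a) (f b) :=
    Icc_subset_Icc_right (hf.monotoneOn hxab ⟨hab, le_rfl⟩ hx.2)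
  have hinv := (hf.bijOn_Icc hab hc).invOn_invFunOn
  have hmaps : MapsTo (invFunOn f (Icc a b)) (Icc (f a) (f x)) (Iic x) := fun y hy => by
    rw [mem_Iic, ← hf.le_iff_le ((hf.bijOn_Icc hab hc).surjOn.mapsTo_invFunOn (hsub hy)) hxab,
      hinv.2 (hsub hy)]
    exact hy.2
  have hfax : f a < f x := hf ⟨le_rfl, hab⟩ hxab hx.1
  have htends : Tendsto (invFunOn f (Icc a b)) (𝓝[Icc (f a) (f x)] (f x))
      (𝓝[Iic x] (invFunOn f (Icc a b) (f x))) :=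
    ((hf.continuousOn_invFunOn_Icc hab hc).mono hsub (f x) ⟨hfax.le, le_rfl⟩).tendsto_nhdsWithin
      hmaps
  refine (HasDerivWithinAt.of_local_left_inverse htends (by rwa [hleft]) hf' ⟨hfax.le, le_rfl⟩
    (eventually_nhdsWithin_of_forall fun y hy => hinv.2 (hsub hy))).mono_of_mem_nhdsWithin ?_
  exact Icc_mem_nhdsLE hfax

end InverseOfStrictMono

theorem integral_one_div_eq_sub_of_hasDerivWithinAt_Iic {f φ : ℝ → ℝ} {a b : ℝ} (hab : a ≤ b)
    (hf : StrictMonoOn f (Icc a b)) (hc : ContinuousOn f (Icc a b))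
    (hderiv : ∀ x ∈ Ioo a b, HasDerivWithinAt f (φ (f x)) (Iic x) x)
    (hφ : ∀ x ∈ Ioo a b, 0 < φ (f x)) :
    ∫ y in f a..f b, 1 / φ y = b - a := by
  have hbij := hf.bijOn_Icc hab hc
  have hinv := hbij.invOn_invFunOn
  have hmem : ∀ y ∈ Ioo (f a) (f b),
      invFunOn f (Icc a b) y ∈ Ioo a b ∧ f (invFunOn f (Icc a b) y) = y := by
    intro y hy
    have hyI := Ioo_subset_Icc_self hy
    have hx := hbij.surjOn.mapsTo_invFunOn hyI
    have hfx := hinv.2 hyI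
    refine ⟨⟨?_, ?_⟩, hfx⟩
    · rw [← hf.lt_iff_lt ⟨le_rfl, hab⟩ hx, hfx]
      exact hy.1
    · rw [← hf.lt_iff_lt hx ⟨hab, le_rfl⟩, hfx]
      exact hy.2
  rw [integral_eq_sub_of_hasDeriv_left_of_nonneg (hf.monotoneOn ⟨le_rfl, hab⟩ ⟨hab, le_rfl⟩ hab)
    (hf.continuousOn_invFunOn_Icc hab hc) (fun y hy => ?_) (fun y hy => ?_),
    hinv.1 ⟨le_rfl, hab⟩, hinv.1 ⟨hab, le_rfl⟩]
  · obtain ⟨hx, hfx⟩ := hmem y hy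
    have := hf.hasDerivWithinAt_invFunOn_Icc hc (Ioo_subset_Ioc_self hx) (hderiv _ hx)
      (hφ _ hx).ne'
    rw [hfx, ← one_div] at this
    exact this.mono Iio_subset_Iic_self
  · obtain ⟨hx, hfx⟩ := hmem y hy
    rw [← hfx]
    exact (one_div_pos.2 (hφ _ hx)).le

section EqIntegral

variable {F φ : ℝ → ℝ}

theorem strictMonoOn_Ici_of_eq_integral (hφ : ∀ s, 0 < s → 0 < φ s)
    (hint : ∀ t, 0 ≤ t → IntervalIntegrable φ volume 0 t)
    (hF : ∀ t, 0 ≤ t → F t = ∫ s in (0:ℝ)..t, φ s) : StrictMonoOn F (Ici 0) := by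
  intro a (ha : 0 ≤ a) b (hb : 0 ≤ b) hab
  have hint_ab : IntervalIntegrable φ volume a b :=
    (hint b hb).mono_set (by rw [uIcc_of_le hab.le, uIcc_of_le hb]; exact Icc_subset_Icc ha le_rfl)
  rw [hF a ha, hF b hb, ← sub_pos, integral_interval_sub_left (hint b hb) (hint a ha)]
  exact intervalIntegral_pos_of_pos_on hint_ab (fun s hs => hφ s (ha.trans_lt hs.1)) hab

theorem hasDerivWithinAt_Iic_of_eq_integral {x : ℝ} (hx : 0 < x)
    (hint : IntervalIntegrable φ volume 0 x) (hF : ∀ t, 0 ≤ t → F t = ∫ s in (0:ℝ)..t, φ s)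
    (hφ : ContinuousWithinAt φ (Iic x) x) : HasDerivWithinAt F (φ x) (Iic x) x := by
  have hmeas : StronglyMeasurableAtFilter φ (𝓝[≤] x) :=
    ⟨Ioc 0 x, Ioc_mem_nhdsLE hx, (hint.1).aestronglyMeasurable⟩
  refine (integral_hasDerivWithinAt_right hint hmeas hφ).congr_of_eventuallyEq ?_ (hF x hx.le)
  filter_upwards [Ioc_mem_nhdsLE hx] with t ht using hF t ht.1.le

end EqIntegral

/-- If `g` is strictly positive and left-continuous, and `Γ` is continuous with
`Γ(0) = 0` solving `Γ(t) = ∫₀ᵗ g(Γ(s)) ds`, then `Γ` is a bijection from `[0,∞)`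
onto its range, and its inverse satisfies `Γ⁻¹(t) = ∫₀ᵗ 1/g(s) ds` on the range. -/
theorem stmt1 (g : ℝ → ℝ) (Γ : ℝ → ℝ)
    (hg_pos : ∀ s, 0 ≤ s → 0 < g s)
    (hg_left : ∀ s, 0 < s → ContinuousWithinAt g (Set.Iic s) s)
    (hΓ_cont : Continuous Γ)
    (hΓ0 : Γ 0 = 0)
    (hΓ_nonneg : ∀ t, 0 ≤ t → 0 ≤ Γ t)
    (hΓ_int : ∀ t, 0 ≤ t → IntervalIntegrable (fun s => g (Γ s)) volume 0 t)
    (hΓ : ∀ t, 0 ≤ t → Γ t = ∫ s in (0:ℝ)..t, g (Γ s)) :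
    Set.BijOn Γ (Set.Ici (0:ℝ)) (Γ '' Set.Ici (0:ℝ)) ∧
      ∀ t ∈ Γ '' Set.Ici (0:ℝ),
        Function.invFunOn Γ (Set.Ici (0:ℝ)) t = ∫ s in (0:ℝ)..t, 1 / g s := by
  have hgΓ_pos : ∀ s, 0 < s → 0 < g (Γ s) := fun s hs => hg_pos _ (hΓ_nonneg s hs.le)
  have hmono : StrictMonoOn Γ (Ici 0) := strictMonoOn_Ici_of_eq_integral hgΓ_pos hΓ_int hΓ
  have hderiv : ∀ x, 0 < x → HasDerivWithinAt Γ (g (Γ x)) (Iic x) x := by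
    intro x hx
    refine hasDerivWithinAt_Iic_of_eq_integral hx (hΓ_int x hx.le) hΓ ?_
    have hΓx : 0 < Γ x := hΓ0 ▸ hmono self_mem_Ici hx.le hx
    have hmaps : MapsTo Γ (Icc 0 x) (Iic (Γ x)) := fun s hs => hmono.monotoneOn hs.1 hx.le hs.2
    exact ((hg_left _ hΓx).comp hΓ_cont.continuousWithinAt hmaps).mono_of_mem_nhdsWithin
      (Icc_mem_nhdsLE hx)
  have key : ∀ u, 0 ≤ u → ∫ s in (0:ℝ)..Γ u, 1 / g s = u := by
    intro u hu
    have := integral_one_div_eq_sub_of_hasDerivWithinAt_Iic hu (hmono.mono Icc_subset_Ici_self)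
      hΓ_cont.continuousOn (fun x hx => hderiv x hx.1) (fun x hx => hgΓ_pos x hx.1)
    rwa [hΓ0, sub_zero] at this
  refine ⟨hmono.injOn.bijOn_image, ?_⟩
  rintro t ⟨u, hu, rfl⟩
  rw [hmono.injOn.leftInvOn_invFunOn hu, key u hu]
end

section
/- Let λ : [0,∞) → [0,∞) be locally integrable, h bounded measurable, and Γ : [0,∞) → [0,∞) continuous, strictly increasing, Γ(0)=0, with left-hand derivative Γ'(s) = g(Γ(s)) for a strictly positive left-continuous g. Then ∫₀^{Γ(t)} h(s) λ(s) ds = ∫₀ᵗ h(Γ(s)) λ(Γ(s)) g(Γ(s)) ds for all t ≥ 0. -/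
/-!
A monotone function is differentiable almost everywhere, and wherever `Γ` is differentiable its
derivative is the left derivative `g ∘ Γ`; hence `g ∘ Γ` is integrable (and nonnegative, `Γ` being
increasing). The fundamental theorem of calculus for left derivatives (the right-derivative
version applied to `u ↦ -Γ (-u)`) gives `∫₀ᶜ g (Γ s) ds = Γ c`, i.e. `Γ` pushes the measure
`g (Γ s) ds` on `(0, t]` forward to Lebesgue measure on `(0, Γ t]`. Integrating `h λ` against
both measures is the formula.
-/

open MeasureTheory intervalIntegral Set
open scoped ENNReal

theorem integral_eq_sub_of_hasDeriv_left_of_le {E : Type*} [NormedAddCommGroup E]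
    [NormedSpace ℝ E] [CompleteSpace E] {f f' : ℝ → E} {a b : ℝ} (hab : a ≤ b)
    (hcont : ContinuousOn f (Icc a b))
    (hderiv : ∀ x ∈ Ioo a b, HasDerivWithinAt f (f' x) (Iio x) x)
    (f'int : IntervalIntegrable f' volume a b) :
    ∫ y in a..b, f' y = f b - f a := by
  have hcont' : ContinuousOn (fun u => -f (-u)) (Icc (-b) (-a)) :=
    (hcont.comp continuousOn_neg fun u hu => ⟨by linarith [hu.2], by linarith [hu.1]⟩).neg
  have hderiv' : ∀ u ∈ Ioo (-b) (-a),
      HasDerivWithinAt (fun u => -f (-u)) (f' (-u)) (Ioi u) u := by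
    intro u hu
    have hf := hderiv (-u) ⟨by linarith [hu.2], by linarith [hu.1]⟩
    simpa [Function.comp_def, Pi.neg_def] using (hf.scomp u (hasDerivWithinAt_neg u (Ioi u))
      fun x (hx : u < x) => show -x < -u by linarith).neg
  have := integral_eq_sub_of_hasDeriv_right_of_le (neg_le_neg hab) hcont' hderiv'
    ((IntervalIntegrable.iff_comp_neg).mp f'int).symm
  rw [← integral_comp_neg] at this
  simpa [sub_eq_neg_add, add_comm] using this

theorem MonotoneOn.ae_eq_deriv_of_hasDerivWithinAt_Iio {f f' : ℝ → ℝ} {s : Set ℝ}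
    (hf : MonotoneOn f s)
    (hderiv : ∀ x ∈ interior s, HasDerivWithinAt f (f' x) (Iio x) x) :
    ∀ᵐ x, x ∈ interior s → f' x = deriv f x := by
  filter_upwards [hf.ae_differentiableWithinAt_of_mem] with x hx hxs
  have hdiff := (hx (interior_subset hxs)).differentiableAt (mem_interior_iff_mem_nhds.mp hxs)
  exact (uniqueDiffWithinAt_Iio x).eq_deriv _ (hderiv x hxs)
    hdiff.hasDerivAt.hasDerivWithinAt

theorem MonotoneOn.intervalIntegrable_of_hasDerivWithinAt_Iio {f f' : ℝ → ℝ} {a b : ℝ}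
    (hab : a ≤ b) (hf : MonotoneOn f (Icc a b))
    (hderiv : ∀ x ∈ Ioo a b, HasDerivWithinAt f (f' x) (Iio x) x) :
    IntervalIntegrable f' volume a b := by
  refine ((hf.mono (uIcc_of_le hab).subset).intervalIntegrable_deriv).congr_ae ?_
  rw [uIoc_of_le hab, ← restrict_Ioo_eq_restrict_Ioc, Filter.EventuallyEq,
    ae_restrict_iff' measurableSet_Ioo]
  have hae := hf.ae_eq_deriv_of_hasDerivWithinAt_Iio (by rwa [interior_Icc])
  rw [interior_Icc] at hae
  filter_upwards [hae] with x hx hxab using (hx hxab).symm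

theorem StrictMono.exists_preimage_Iic_inter_Ioc {f : ℝ → ℝ} (hf : StrictMono f)
    (hcont : Continuous f) {a b : ℝ} (hab : a ≤ b) (y : ℝ) :
    ∃ c ∈ Icc a b, f ⁻¹' Iic y ∩ Ioc a b = Ioc a c ∧
      Iic y ∩ Ioc (f a) (f b) = Ioc (f a) (f c) := by
  rcases lt_or_ge y (f a) with hy | hy
  · refine ⟨a, left_mem_Icc.mpr hab, ?_, ?_⟩
    · rw [Ioc_self, eq_empty_iff_forall_notMem]
      exact fun x ⟨hxy, hax, _⟩ => (hf hax).not_ge (hxy.trans hy.le)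
    · rw [Ioc_self, eq_empty_iff_forall_notMem]
      exact fun x ⟨hxy, hax, _⟩ => hax.not_ge (hxy.trans hy.le)
  obtain ⟨c, hc, hfc⟩ : min y (f b) ∈ f '' Icc a b :=
    intermediate_value_Icc hab hcont.continuousOn
      ⟨le_min hy (hf.monotone hab), min_le_right _ _⟩
  refine ⟨c, hc, ?_, ?_⟩
  · ext x
    simp only [mem_inter_iff, mem_preimage, mem_Iic, mem_Ioc]
    rw [← hf.le_iff_le (a := x) (b := c), hfc, le_min_iff, ← hf.le_iff_le (a := x) (b := b)]
    tauto
  · ext x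
    simp only [mem_inter_iff, mem_Iic, mem_Ioc, hfc, le_min_iff]
    tauto

theorem StrictMono.map_withDensity_restrict_Ioc {f : ℝ → ℝ} (hf : StrictMono f)
    (hcont : Continuous f) {a b : ℝ} (hab : a ≤ b) {ρ : ℝ → ℝ≥0∞}
    (hρ : ∀ c ∈ Icc a b, ∫⁻ x in Ioc a c, ρ x = ENNReal.ofReal (f c - f a)) :
    ((volume.restrict (Ioc a b)).withDensity ρ).map f = volume.restrict (Ioc (f a) (f b)) := by
  have : IsFiniteMeasure ((volume.restrict (Ioc a b)).withDensity ρ) :=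
    ⟨by simp [hρ b (right_mem_Icc.mpr hab)]⟩
  refine Measure.ext_of_Iic _ _ fun y => ?_
  obtain ⟨c, hc, hpre, himg⟩ := hf.exists_preimage_Iic_inter_Ioc hcont hab y
  rw [Measure.map_apply hcont.measurable measurableSet_Iic,
    withDensity_apply' _ _, Measure.restrict_restrict' measurableSet_Ioc, hpre, hρ c hc,
    Measure.restrict_apply' measurableSet_Ioc, himg, Real.volume_Ioc]

theorem StrictMono.integral_comp_smul_of_hasDerivWithinAt_Iio {E : Type*}
    [NormedAddCommGroup E] [NormedSpace ℝ E] {f f' : ℝ → ℝ} {a b : ℝ} (hab : a ≤ b)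
    (hf : StrictMono f) (hcont : Continuous f)
    (hderiv : ∀ x ∈ Ioo a b, HasDerivWithinAt f (f' x) (Iio x) x) (φ : ℝ → E) :
    ∫ x in a..b, f' x • φ (f x) = ∫ y in f a..f b, φ y := by
  have hint : IntegrableOn f' (Ioc a b) :=
    (intervalIntegrable_iff_integrableOn_Ioc_of_le hab).mp
      ((hf.monotone.monotoneOn _).intervalIntegrable_of_hasDerivWithinAt_Iio hab hderiv)
  have hnonneg : 0 ≤ᵐ[volume.restrict (Ioc a b)] f' := by
    rw [← restrict_Ioo_eq_restrict_Ioc, Filter.EventuallyLE, ae_restrict_iff' measurableSet_Ioo]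
    exact Filter.Eventually.of_forall fun x hx =>
      (hderiv x hx).nonneg_of_monotoneOn
        (uniqueDiffWithinAt_iff_accPt.mp (uniqueDiffWithinAt_Iio x))
        (hf.monotone.monotoneOn _)
  have hFTC : ∀ c ∈ Icc a b,
      ∫⁻ x in Ioc a c, ENNReal.ofReal (f' x) = ENNReal.ofReal (f c - f a) := by
    intro c hc
    have hsub : Ioc a c ⊆ Ioc a b := Ioc_subset_Ioc_right hc.2
    rw [← ofReal_integral_eq_lintegral_ofReal (hint.mono_set hsub)
      (ae_restrict_of_ae_restrict_of_subset hsub hnonneg), ← integral_of_le hc.1,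
      integral_eq_sub_of_hasDeriv_left_of_le hc.1 hcont.continuousOn
        (fun x hx => hderiv x (Ioo_subset_Ioo_right hc.2 hx))
        ((intervalIntegrable_iff_integrableOn_Ioc_of_le hc.1).mpr (hint.mono_set hsub))]
  rw [integral_of_le hab, integral_of_le (hf.monotone hab),
    ← hf.map_withDensity_restrict_Ioc hcont hab hFTC,
    (hcont.measurableEmbedding hf.injective).integral_map,
    integral_withDensity_eq_integral_toReal_smul₀ hint.aemeasurable.ennreal_ofReal
      (Filter.Eventually.of_forall fun _ => ENNReal.ofReal_lt_top)]
  refine integral_congr_ae ?_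
  filter_upwards [hnonneg] with x hx
  rw [ENNReal.toReal_ofReal hx]

theorem stmt5_general (lam h g : ℝ → ℝ) (Γ : ℝ → ℝ)
    (hΓ_cont : Continuous Γ)
    (hΓ_mono : StrictMono Γ)
    (hΓ0 : Γ 0 = 0)
    (hΓ_deriv : ∀ s, 0 < s → HasDerivWithinAt Γ (g (Γ s)) (Set.Iio s) s) :
    ∀ t, 0 ≤ t →
      ∫ s in (0:ℝ)..(Γ t), h s * lam s
        = ∫ s in (0:ℝ)..t, h (Γ s) * lam (Γ s) * g (Γ s) := by
  intro t ht
  have hcov := hΓ_mono.integral_comp_smul_of_hasDerivWithinAt_Iio ht hΓ_cont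
    (fun s hs => hΓ_deriv s hs.1) (fun s => h s * lam s)
  rw [hΓ0] at hcov
  simpa [mul_comm] using hcov.symm

/-- Change of variables for the intensity integral under the time change `Γ` with
left-hand derivative `Γ'(s) = g(Γ(s))`:
`∫₀^{Γ(t)} h(s) λ(s) ds = ∫₀ᵗ h(Γ(s)) λ(Γ(s)) g(Γ(s)) ds`. -/
theorem stmt5 (lam h g : ℝ → ℝ) (Γ : ℝ → ℝ)
    (hlam_nonneg : ∀ s, 0 ≤ lam s)
    (hlam_loc : LocallyIntegrable lam volume)
    (hh_bdd : ∃ C, ∀ s, |h s| ≤ C)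
    (hh_meas : Measurable h)
    (hg_pos : ∀ s, 0 ≤ s → 0 < g s)
    (hg_left : ∀ s, 0 < s → ContinuousWithinAt g (Set.Iic s) s)
    (hΓ_cont : Continuous Γ)
    (hΓ_mono : StrictMono Γ)
    (hΓ0 : Γ 0 = 0)
    (hΓ_deriv : ∀ s, 0 < s → HasDerivWithinAt Γ (g (Γ s)) (Set.Iio s) s) :
    ∀ t, 0 ≤ t →
      ∫ s in (0:ℝ)..(Γ t), h s * lam s
        = ∫ s in (0:ℝ)..t, h (Γ s) * lam (Γ s) * g (Γ s) :=
  stmt5_general lam h g Γ hΓ_cont hΓ_mono hΓ0 hΓ_deriv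
end

section
/- Let M be a martingale of finite variation with M(0)=0, and let g be a bounded predictable process. Then the SDE R(t) = 1 + ∫₀ᵗ R(s−)(g(s) − 1) dM(s) has a unique solution given by the stochastic exponential, and when M(t) = N(t) − ∫₀ᵗ λ(s) ds for a counting process N with intensity λ, the solution is R(t) = exp(−∫₀ᵗ (g(s)−1) λ(s) ds) · ∏_{s ≤ t, ΔN(s)=1} g(s). -/
open MeasureTheory intervalIntegral Set

/-- `R` solves the likelihood-ratio SDE `R(t) = 1 + ∫₀ᵗ R(s−)(g(s)−1) dM(s)` pathwise,
where `M(t) = N(t) − ∫₀ᵗ λ(s) ds` and `N` is a counting process; the `dM`-integral is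
split into its Lebesgue–Stieltjes part against `dN` and its Lebesgue part against `λ ds`. -/
def SolvesLRSDE (N : StieltjesFunction ℝ) (g lam : ℝ → ℝ) (R : ℝ → ℝ) : Prop :=
  (∀ t, ContinuousWithinAt R (Set.Ici t) t) ∧
  (∀ t, 0 ≤ t → IntegrableOn (fun s => Function.leftLim R s * (g s - 1)) (Set.Ioc 0 t)
      N.measure) ∧
  (∀ t, 0 ≤ t → IntervalIntegrable (fun s => R s * (g s - 1) * lam s) volume 0 t) ∧
  ∀ t, 0 ≤ t →
    R t = 1 + (∫ s in Set.Ioc (0:ℝ) t, Function.leftLim R s * (g s - 1) ∂N.measure)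
            - ∫ s in (0:ℝ)..t, R s * (g s - 1) * lam s

/-- The Doléans-Dade (stochastic exponential) solution:
`R(t) = exp(−∫₀ᵗ (g−1)λ) · ∏_{s ≤ t, ΔN(s)=1} g(s)`. -/
noncomputable def doleansDade (N : StieltjesFunction ℝ) (g lam : ℝ → ℝ) (t : ℝ) : ℝ :=
  Real.exp (-(∫ s in (0:ℝ)..t, (g s - 1) * lam s)) *
    ∏ᶠ s ∈ {s : ℝ | 0 < s ∧ s ≤ t ∧ Function.leftLim N s < N s}, g s

/-!
Between two jumps of `N` the equation reduces to the linear integral equation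
`R x = R a - ∫ₐˣ R (g - 1) λ`, whose solutions are exactly `R a · exp (-∫ₐˣ (g - 1) λ)`: both
directions are the fundamental theorem of calculus for the absolutely continuous functions
`exp (± ∫ₐˣ (g - 1) λ)`. At a jump time `m` the `dN`-integral contributes `R(m-) (g m - 1)`, so
`R m = R(m-) · g m`. A counting process has finitely many jumps in `(0, t]` and `dN` restricted to
`(0, t]` is the sum of the unit masses at them, so an induction on the number of jumps shows both
that the Doléans-Dade exponential solves the equation and that any two solutions agree.
-/

open Filter Function Topology

theorem LipschitzOnWith.comp_absolutelyContinuousOnInterval {X Y : Type*} [PseudoMetricSpace X]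
    [PseudoMetricSpace Y] {φ : X → Y} {K : NNReal} {s : Set X} {f : ℝ → X} {a b : ℝ}
    (hφ : LipschitzOnWith K φ s) (hf : AbsolutelyContinuousOnInterval f a b)
    (hfs : MapsTo f (uIcc a b) s) : AbsolutelyContinuousOnInterval (φ ∘ f) a b := by
  unfold AbsolutelyContinuousOnInterval at hf ⊢
  refine squeeze_zero' (Eventually.of_forall fun E => Finset.sum_nonneg fun i _ => dist_nonneg)
    (eventually_inf_principal.2 (Eventually.of_forall fun E hE => ?_))
    (by simpa using Tendsto.const_mul (K : ℝ) hf)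
  rw [Finset.mul_sum]
  exact Finset.sum_le_sum fun i hi =>
    hφ.dist_le_mul _ (hfs (hE.1 i hi).1) _ (hfs (hE.1 i hi).2)

theorem AbsolutelyContinuousOnInterval.rexp {f : ℝ → ℝ} {a b : ℝ}
    (hf : AbsolutelyContinuousOnInterval f a b) :
    AbsolutelyContinuousOnInterval (fun x => Real.exp (f x)) a b := by
  obtain ⟨K, hK⟩ := Real.contDiff_exp.locallyLipschitz.locallyLipschitzOn
    |>.exists_lipschitzOnWith_of_compact (isCompact_uIcc.image_of_continuousOn hf.continuousOn)
  exact hK.comp_absolutelyContinuousOnInterval hf (mapsTo_image _ _)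

theorem exp_neg_integral_eq_one_sub {h : ℝ → ℝ} {a b : ℝ} (hh : IntervalIntegrable h volume a b) :
    Real.exp (-∫ s in a..b, h s) = 1 - ∫ x in a..b, Real.exp (-∫ s in a..x, h s) * h x := by
  set E := fun x => Real.exp (-∫ s in a..x, h s)
  have hderiv : ∫ x in a..b, deriv E x = -∫ x in a..b, E x * h x := by
    rw [← intervalIntegral.integral_neg]
    refine intervalIntegral.integral_congr_ae ?_
    filter_upwards [hh.ae_hasDerivAt_integral] with x hx hxab
    have hE : HasDerivAt E (E x * -h x) x := (hx (uIoc_subset_uIcc hxab) a left_mem_uIcc).neg.exp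
    rw [hE.deriv, mul_neg]
  have hftc : ∫ x in a..b, deriv E x = E b - E a :=
    (hh.absolutelyContinuousOnInterval_intervalIntegral left_mem_uIcc).neg.rexp
      |>.integral_deriv_eq_sub
  simp only [E, intervalIntegral.integral_same, neg_zero, Real.exp_zero] at hftc hderiv ⊢
  linarith

theorem eq_mul_exp_neg_integral_of_eq_sub_integral {h R : ℝ → ℝ} {a b : ℝ}
    (hh : IntervalIntegrable h volume a b)
    (hRh : IntervalIntegrable (fun x => R x * h x) volume a b)
    (hR : ∀ x ∈ uIcc a b, R x = R a - ∫ s in a..x, R s * h s) :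
    R b = R a * Real.exp (-∫ s in a..b, h s) := by
  set Φ := fun x => ∫ s in a..x, R s * h s
  set H := fun x => ∫ s in a..x, h s
  have hΦ : AbsolutelyContinuousOnInterval Φ a b :=
    hRh.absolutelyContinuousOnInterval_intervalIntegral left_mem_uIcc
  have hH : AbsolutelyContinuousOnInterval (fun x => Real.exp (H x)) a b :=
    (hh.absolutelyContinuousOnInterval_intervalIntegral left_mem_uIcc).rexp
  -- `(R a - Φ) e^H` has derivative `(-R h + (R a - Φ) h) e^H`, which vanishes where `R = R a - Φ`
  obtain ⟨C, hC⟩ := ((hH.const_mul (R a)).sub (hΦ.mul hH)).const_of_ae_hasDerivAt_zero (by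
    filter_upwards [hh.ae_hasDerivAt_integral, hRh.ae_hasDerivAt_integral] with x hHx hΦx hx
    convert ((hHx hx a left_mem_uIcc).exp.const_mul (R a)).sub
      ((hΦx hx a left_mem_uIcc).mul (hHx hx a left_mem_uIcc).exp) using 1
    rw [hR x hx]; ring)
  have hCa := hC a left_mem_uIcc
  have hCb := hC b right_mem_uIcc
  simp only [Pi.sub_apply, Pi.mul_apply, Φ, H, intervalIntegral.integral_same,
    Real.exp_zero] at hCa hCb
  rw [hR b right_mem_uIcc, Real.exp_neg, eq_mul_inv_iff_mul_eq₀ (Real.exp_pos _).ne']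
  linarith

theorem intervalIntegrable_and_integral_mul_of_eqOn {h φ : ℝ → ℝ} {a b c : ℝ}
    (hh : IntervalIntegrable h volume a b)
    (hφ : EqOn φ (fun x => c * Real.exp (-∫ s in a..x, h s)) (uIoo a b)) :
    IntervalIntegrable (fun x => φ x * h x) volume a b ∧
      ∫ x in a..b, φ x * h x = c * (1 - Real.exp (-∫ s in a..b, h s)) := by
  have heq : EqOn (fun x => c * (Real.exp (-∫ s in a..x, h s) * h x)) (fun x => φ x * h x)
      (uIoo a b) := fun x hx => by simp only [hφ hx, mul_assoc]
  have hcont : ContinuousOn (fun x => Real.exp (-∫ s in a..x, h s)) (uIcc a b) :=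
    (continuousOn_primitive_interval' hh left_mem_uIcc).neg.rexp
  refine ⟨((hh.continuousOn_mul hcont).const_mul c).congr_uIoo heq, ?_⟩
  rw [← integral_congr_uIoo heq, intervalIntegral.integral_const_mul,
    exp_neg_integral_eq_one_sub hh]
  ring

theorem leftLim_eq_of_eqOn_Ioo {β : Type*} [TopologicalSpace β] [T2Space β] {f φ : ℝ → β}
    {u m : ℝ} (hum : u < m) (heq : EqOn f φ (Ioo u m)) (hφ : ContinuousWithinAt φ (Ioo u m) m) :
    leftLim f m = φ m := by
  rw [ContinuousWithinAt, nhdsWithin_Ioo_eq_nhdsLT hum] at hφ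
  exact leftLim_eq_of_tendsto (hφ.congr' (eventuallyEq_of_mem (Ioo_mem_nhdsLT hum) heq.symm))

namespace StieltjesFunction

variable (N : StieltjesFunction ℝ)

def jumpTimes (t : ℝ) : Set ℝ := {s | 0 < s ∧ s ≤ t ∧ leftLim N s < N s}

variable {N}

theorem jumpTimes_mono : Monotone N.jumpTimes :=
  fun _ _ hxy _ hs => ⟨hs.1, hs.2.1.trans hxy, hs.2.2⟩

theorem jumpTimes_zero : N.jumpTimes 0 = ∅ :=
  eq_empty_of_forall_notMem fun _ hs => (hs.1.trans_le hs.2.1).false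

theorem not_jump_of_jumpTimes_eq {a s x : ℝ} (ha : 0 ≤ a) (has : a < s) (hsx : s ≤ x)
    (hJ : N.jumpTimes x = N.jumpTimes a) : ¬ leftLim N s < N s := fun hjs =>
  has.not_ge (hJ ▸ show s ∈ N.jumpTimes x from ⟨ha.trans_lt has, hsx, hjs⟩ : s ∈ N.jumpTimes a).2.1

theorem jumpTimes_eq_of_mem_Icc {a b x : ℝ} (hJ : N.jumpTimes b = N.jumpTimes a)
    (hx : x ∈ Icc a b) : N.jumpTimes x = N.jumpTimes a :=
  le_antisymm (hJ ▸ jumpTimes_mono hx.2) (jumpTimes_mono hx.1)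

theorem eventually_jumpTimes_eq (hfin : ∀ t, (N.jumpTimes t).Finite) (t : ℝ) :
    ∀ᶠ x in 𝓝[≥] t, N.jumpTimes x = N.jumpTimes t := by
  have hlater : ∀ᶠ x in 𝓝[≥] t, ∀ s ∈ N.jumpTimes (t + 1), t < s → x < s := by
    refine (eventually_all_finite (hfin (t + 1))).2 fun s _ => ?_
    by_cases hts : t < s
    · filter_upwards [Ico_mem_nhdsGE hts] with x hx _ using hx.2
    · exact Eventually.of_forall fun _ h => absurd h hts
  filter_upwards [hlater, self_mem_nhdsWithin, Ico_mem_nhdsGE (lt_add_one t)] with x hx htx hxt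
  refine Subset.antisymm (fun s hs => ⟨hs.1, not_lt.1 fun hts => ?_, hs.2.2⟩) (jumpTimes_mono htx)
  exact (hx s (jumpTimes_mono hxt.2.le hs) hts).not_ge hs.2.1

theorem exists_last_jump {t : ℝ} (hfin : (N.jumpTimes t).Finite) (hne : (N.jumpTimes t).Nonempty) :
    ∃ u m, 0 ≤ u ∧ u < m ∧ m ≤ t ∧ (∀ x ∈ Ico u m, N.jumpTimes x = N.jumpTimes u) ∧
      N.jumpTimes m = insert m (N.jumpTimes u) ∧ N.jumpTimes t = N.jumpTimes m := by
  set m := sSup (N.jumpTimes t)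
  have hm : m ∈ N.jumpTimes t := hne.csSup_mem hfin
  have hle_m : ∀ s ∈ N.jumpTimes t, s ≤ m := fun s hs => le_csSup hfin.bddAbove hs
  set B := insert 0 (N.jumpTimes t ∩ Iio m)
  have hB : B.Finite := (hfin.inter_of_left _).insert 0
  set u := sSup B
  have hle_u : ∀ s ∈ N.jumpTimes t, s < m → s ≤ u :=
    fun s hs hsm => le_csSup hB.bddAbove (mem_insert_of_mem _ ⟨hs, hsm⟩)
  have hu0 : 0 ≤ u := le_csSup hB.bddAbove (mem_insert _ _)
  have hum : u < m := by
    rcases (insert_nonempty _ _).csSup_mem hB with hu | hu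
    · rw [show u = 0 from hu]; exact hm.1
    · exact hu.2
  have hJx : ∀ x ∈ Ico u m, N.jumpTimes x = N.jumpTimes u := by
    refine fun x hx => (Subset.antisymm (fun s hs => ?_) (jumpTimes_mono hx.1))
    exact ⟨hs.1, hle_u s (jumpTimes_mono (hx.2.le.trans hm.2.1) hs)
      (hs.2.1.trans_lt hx.2), hs.2.2⟩
  refine ⟨u, m, hu0, hum, hm.2.1, hJx, ?_, ?_⟩
  · ext s
    refine ⟨fun hs => ?_, ?_⟩
    · rcases hs.2.1.eq_or_lt with rfl | hsm
      · exact mem_insert _ _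
      · exact mem_insert_of_mem _
          ⟨hs.1, hle_u s (jumpTimes_mono hm.2.1 hs) hsm, hs.2.2⟩
    · rintro (rfl | hs)
      · exact ⟨hm.1, le_rfl, hm.2.2⟩
      · exact jumpTimes_mono hum.le hs
  · exact Subset.antisymm (fun s hs => ⟨hs.1, hle_m s hs, hs.2.2⟩) (jumpTimes_mono hm.2.1)

theorem jumpTimes_induction (hfin : ∀ t, (N.jumpTimes t).Finite) {P : ℝ → Prop} (h0 : P 0)
    (hcont : ∀ a b, 0 ≤ a → a ≤ b → N.jumpTimes b = N.jumpTimes a → P a → P b)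
    (hjump : ∀ u m, 0 ≤ u → u < m → (∀ x ∈ Ico u m, N.jumpTimes x = N.jumpTimes u) →
      N.jumpTimes m = insert m (N.jumpTimes u) → P u → P m) :
    ∀ t, 0 ≤ t → P t := by
  intro t ht
  induction hn : (N.jumpTimes t).ncard using Nat.strong_induction_on generalizing t with
  | _ n ih =>
  rcases (N.jumpTimes t).eq_empty_or_nonempty with hempty | hne
  · exact hcont 0 t le_rfl ht (hempty.trans jumpTimes_zero.symm) h0
  obtain ⟨u, m, hu0, hum, hmt, hJx, hJm, hJt⟩ := exists_last_jump (hfin t) hne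
  have hlt : (N.jumpTimes u).ncard < n := by
    refine hn ▸ ncard_lt_ncard ?_ (hfin t)
    rw [hJt, hJm]
    exact ssubset_insert fun hm => hum.not_ge hm.2.1
  exact hcont m t (hu0.trans hum.le) hmt hJt
    (hjump u m hu0 hum hJx hJm (ih _ hlt u hu0 rfl))

theorem apply_eq_of_forall_not_jump (hN_nat : ∀ t, ∃ n : ℕ, N t = n) {a b : ℝ} (hab : a ≤ b)
    (hnj : ∀ s ∈ Ioc a b, ¬ leftLim N s < N s) : N b = N a := by
  have hcont : ContinuousOn N (Icc a b) := by
    intro c hc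
    rcases hc.1.eq_or_lt with rfl | hac
    · exact (N.right_continuous a).mono Icc_subset_Ici_self
    refine (N.mono.continuousAt_iff_leftLim_eq_rightLim.2 ?_).continuousWithinAt
    rw [(N.right_continuous c).rightLim_eq]
    exact le_antisymm (N.mono.leftLim_le le_rfl) (not_lt.1 (hnj c ⟨hac, hc.2⟩))
  -- an integer-valued function with the intermediate value property on `[a, b]` is constant
  by_contra hne
  obtain ⟨k, hk⟩ := hN_nat a
  obtain ⟨l, hl⟩ := hN_nat b
  have hkl : k < l := by exact_mod_cast hk ▸ hl ▸ (N.mono hab).lt_of_ne' hne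
  have hmid : (k : ℝ) + 1 / 2 ∈ Icc (N a) (N b) := by
    have : (k : ℝ) + 1 ≤ l := by exact_mod_cast hkl
    rw [hk, hl]; constructor <;> linarith
  obtain ⟨c, -, hc⟩ := intermediate_value_Icc hab hcont hmid
  obtain ⟨n, hn⟩ := hN_nat c
  rw [hn] at hc
  have h1 : k < n := by exact_mod_cast (show (k : ℝ) < n by linarith)
  have h2 : n < k + 1 := by exact_mod_cast (show (n : ℝ) < k + 1 by linarith)
  omega

theorem leftLim_eq_of_forall_not_jump (hN_nat : ∀ t, ∃ n : ℕ, N t = n) {u m : ℝ} (hum : u < m)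
    (hnj : ∀ s ∈ Ioo u m, ¬ leftLim N s < N s) : leftLim N m = N u :=
  leftLim_eq_of_eqOn_Ioo hum (fun _ hx => apply_eq_of_forall_not_jump hN_nat hx.1.le
    fun s hs => hnj s ⟨hs.1, hs.2.trans_lt hx.2⟩) continuousWithinAt_const

structure IsCountingProcess (N : StieltjesFunction ℝ) : Prop where
  exists_eq_natCast : ∀ t, ∃ n : ℕ, N t = n
  jump_le_one : ∀ t, N t - leftLim N t ≤ 1
  finite_jumpTimes : ∀ t, (N.jumpTimes t).Finite

namespace IsCountingProcess

theorem measure_singleton_of_jump (hN : N.IsCountingProcess) {s : ℝ} (hs : leftLim N s < N s) :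
    N.measure {s} = 1 := by
  obtain ⟨k, hk⟩ : leftLim N s ∈ range ((↑) : ℕ → ℝ) :=
    Nat.isClosedEmbedding_coe_real.isClosed_range.mem_of_tendsto (N.mono.tendsto_leftLim s)
      (Eventually.of_forall fun x => (hN.exists_eq_natCast x).imp fun _ hn => hn.symm)
  obtain ⟨n, hn⟩ := hN.exists_eq_natCast s
  have hjump := hN.jump_le_one s
  rw [← hk, hn] at hs hjump
  have hkn : n = k + 1 := by
    have h1 : k < n := by exact_mod_cast hs
    have h2 : n ≤ k + 1 := by exact_mod_cast (show (n : ℝ) ≤ k + 1 by linarith)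
    omega
  rw [N.measure_singleton, ← hk, hn, hkn]
  simp

theorem measure_Ioc_diff_jumpTimes (hN : N.IsCountingProcess) {t : ℝ} (ht : 0 ≤ t) :
    N.measure (Ioc 0 t \ N.jumpTimes t) = 0 := by
  refine jumpTimes_induction (P := fun t => N.measure (Ioc 0 t \ N.jumpTimes t) = 0)
    hN.finite_jumpTimes (by simp) (fun a b ha hab hJ hP => ?_)
    (fun u m hu hum hJx hJm hP => ?_) t ht
  · have hnull : N.measure (Ioc a b) = 0 := by
      have hnj : ∀ s ∈ Ioc a b, ¬ leftLim N s < N s :=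
        fun s hs => not_jump_of_jumpTimes_eq ha hs.1 hs.2 hJ
      simp [N.measure_Ioc, apply_eq_of_forall_not_jump hN.exists_eq_natCast hab hnj]
    refine measure_mono_null (fun x hx => ?_) (measure_union_null hP hnull)
    by_cases hxa : x ≤ a
    · exact Or.inl ⟨⟨hx.1.1, hxa⟩, hJ ▸ hx.2⟩
    · exact Or.inr ⟨not_le.1 hxa, hx.1.2⟩
  · have hnull : N.measure (Ioo u m) = 0 := by
      have hnj : ∀ s ∈ Ioo u m, ¬ leftLim N s < N s :=
        fun s hs => not_jump_of_jumpTimes_eq hu hs.1 le_rfl (hJx s ⟨hs.1.le, hs.2⟩)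
      simp [N.measure_Ioo, leftLim_eq_of_forall_not_jump hN.exists_eq_natCast hum hnj]
    refine measure_mono_null (fun x hx => ?_) (measure_union_null hP hnull)
    by_cases hxu : x ≤ u
    · exact Or.inl ⟨⟨hx.1.1, hxu⟩, fun hxJ => hx.2 (hJm ▸ mem_insert_of_mem _ hxJ)⟩
    · refine Or.inr ⟨not_le.1 hxu, hx.1.2.lt_of_ne fun hxm => hx.2 ?_⟩
      exact hJm ▸ hxm ▸ mem_insert _ _

theorem restrict_Ioc_eq_restrict_jumpTimes (hN : N.IsCountingProcess) {t : ℝ} (ht : 0 ≤ t) :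
    N.measure.restrict (Ioc 0 t) = N.measure.restrict (N.jumpTimes t) := by
  have hsub : N.jumpTimes t ⊆ Ioc 0 t := fun s hs => ⟨hs.1, hs.2.1⟩
  exact Measure.restrict_congr_set <| ae_eq_set.2
    ⟨hN.measure_Ioc_diff_jumpTimes ht, by simp [sdiff_eq_empty.2 hsub]⟩

theorem integrableOn_jumpTimes {E : Type*} [NormedAddCommGroup E] (hN : N.IsCountingProcess)
    (t : ℝ) (f : ℝ → E) : IntegrableOn f (N.jumpTimes t) N.measure := by
  rw [← biUnion_of_singleton (N.jumpTimes t), integrableOn_finite_biUnion (hN.finite_jumpTimes t)]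
  exact fun s hs => integrableOn_singleton (hx := by rw [hN.measure_singleton_of_jump hs.2.2]; simp)

theorem integrableOn_Ioc {E : Type*} [NormedAddCommGroup E] (hN : N.IsCountingProcess) {t : ℝ}
    (ht : 0 ≤ t) (f : ℝ → E) : IntegrableOn f (Ioc 0 t) N.measure := by
  rw [IntegrableOn, hN.restrict_Ioc_eq_restrict_jumpTimes ht]
  exact hN.integrableOn_jumpTimes t f

theorem setIntegral_Ioc_eq_finsum {E : Type*} [NormedAddCommGroup E] [NormedSpace ℝ E]
    [CompleteSpace E] (hN : N.IsCountingProcess) {t : ℝ} (ht : 0 ≤ t) (f : ℝ → E) :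
    ∫ s in Ioc 0 t, f s ∂N.measure = ∑ᶠ s ∈ N.jumpTimes t, f s := by
  have hJ := hN.finite_jumpTimes t
  rw [hN.restrict_Ioc_eq_restrict_jumpTimes ht, ← hJ.coe_toFinset,
    setIntegral_finset _ (by rw [hJ.coe_toFinset]; exact hN.integrableOn_jumpTimes t f),
    finsum_mem_coe_finset]
  refine Finset.sum_congr rfl fun s hs => ?_
  rw [measureReal_def, hN.measure_singleton_of_jump (hJ.mem_toFinset.1 hs).2.2]
  simp

end IsCountingProcess

end StieltjesFunction

section LikelihoodRatio

open StieltjesFunction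

variable {N : StieltjesFunction ℝ} {g lam R : ℝ → ℝ}

theorem doleansDade_apply (t : ℝ) : doleansDade N g lam t =
    Real.exp (-∫ s in (0:ℝ)..t, (g s - 1) * lam s) * ∏ᶠ s ∈ N.jumpTimes t, g s :=
  rfl

theorem doleansDade_eq_mul_exp
    (hh : ∀ a b, IntervalIntegrable (fun s => (g s - 1) * lam s) volume a b)
    {a b : ℝ} (hJ : N.jumpTimes b = N.jumpTimes a) :
    doleansDade N g lam b = doleansDade N g lam a * Real.exp (-∫ s in a..b, (g s - 1) * lam s) := by
  rw [doleansDade_apply, doleansDade_apply, hJ,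
    ← integral_add_adjacent_intervals (hh 0 a) (hh a b), neg_add, Real.exp_add]
  ring

theorem doleansDade_eq_mul_exp_mul
    (hh : ∀ a b, IntervalIntegrable (fun s => (g s - 1) * lam s) volume a b)
    (hfin : ∀ t, (N.jumpTimes t).Finite) {u m : ℝ} (hum : u < m)
    (hJm : N.jumpTimes m = insert m (N.jumpTimes u)) :
    doleansDade N g lam m =
      doleansDade N g lam u * Real.exp (-∫ s in u..m, (g s - 1) * lam s) * g m := by
  rw [doleansDade_apply, doleansDade_apply, hJm,
    finprod_mem_insert _ (fun hm => hum.not_ge hm.2.1) (hfin u),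
    ← integral_add_adjacent_intervals (hh 0 u) (hh u m), neg_add, Real.exp_add]
  ring

theorem leftLim_doleansDade
    (hh : ∀ a b, IntervalIntegrable (fun s => (g s - 1) * lam s) volume a b)
    {u m : ℝ} (hum : u < m) (hJx : ∀ x ∈ Ioo u m, N.jumpTimes x = N.jumpTimes u) :
    leftLim (doleansDade N g lam) m =
      doleansDade N g lam u * Real.exp (-∫ s in u..m, (g s - 1) * lam s) :=
  leftLim_eq_of_eqOn_Ioo hum (fun x hx => doleansDade_eq_mul_exp hh (hJx x hx))
    ((continuous_primitive hh u).neg.rexp.const_mul _).continuousWithinAt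

theorem continuousWithinAt_doleansDade
    (hh : ∀ a b, IntervalIntegrable (fun s => (g s - 1) * lam s) volume a b)
    (hfin : ∀ t, (N.jumpTimes t).Finite) (t : ℝ) :
    ContinuousWithinAt (doleansDade N g lam) (Ici t) t := by
  refine ((continuous_primitive hh t).neg.rexp.const_mul (doleansDade N g lam t)).continuousWithinAt
    |>.congr_of_eventuallyEq ?_ (by simp)
  filter_upwards [eventually_jumpTimes_eq hfin t] with x hx using doleansDade_eq_mul_exp hh hx

theorem intervalIntegrable_and_integral_doleansDade_mul
    (hh : ∀ a b, IntervalIntegrable (fun s => (g s - 1) * lam s) volume a b) {a b : ℝ}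
    (hab : a ≤ b) (hJx : ∀ x ∈ Ioo a b, N.jumpTimes x = N.jumpTimes a) :
    IntervalIntegrable (fun s => doleansDade N g lam s * (g s - 1) * lam s) volume a b ∧
      ∫ s in a..b, doleansDade N g lam s * (g s - 1) * lam s =
        doleansDade N g lam a * (1 - Real.exp (-∫ s in a..b, (g s - 1) * lam s)) := by
  simpa only [mul_assoc] using intervalIntegrable_and_integral_mul_of_eqOn (hh a b)
    fun x hx => doleansDade_eq_mul_exp hh (hJx x (uIoo_of_le hab ▸ hx))

theorem intervalIntegrable_doleansDade (hN : N.IsCountingProcess)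
    (hh : ∀ a b, IntervalIntegrable (fun s => (g s - 1) * lam s) volume a b) :
    ∀ t, 0 ≤ t →
      IntervalIntegrable (fun s => doleansDade N g lam s * (g s - 1) * lam s) volume 0 t :=
  jumpTimes_induction hN.finite_jumpTimes (by simp)
    (fun _ _ _ hab hJ hP => hP.trans (intervalIntegrable_and_integral_doleansDade_mul hh hab
      fun _ hx => jumpTimes_eq_of_mem_Icc hJ (Ioo_subset_Icc_self hx)).1)
    (fun _ _ _ hum hJx _ hP => hP.trans (intervalIntegrable_and_integral_doleansDade_mul hh hum.le
      fun x hx => hJx x ⟨hx.1.le, hx.2⟩).1)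

theorem doleansDade_eq_finsum (hN : N.IsCountingProcess)
    (hh : ∀ a b, IntervalIntegrable (fun s => (g s - 1) * lam s) volume a b) :
    ∀ t, 0 ≤ t → doleansDade N g lam t = 1 +
      ∑ᶠ s ∈ N.jumpTimes t, leftLim (doleansDade N g lam) s * (g s - 1) -
        ∫ s in (0:ℝ)..t, doleansDade N g lam s * (g s - 1) * lam s := by
  refine jumpTimes_induction hN.finite_jumpTimes (by simp [doleansDade_apply, jumpTimes_zero])
    (fun a b ha hab hJ hP => ?_) (fun u m hu hum hJx hJm hP => ?_)
  · obtain ⟨hint, hI⟩ := intervalIntegrable_and_integral_doleansDade_mul hh hab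
      fun _ hx => jumpTimes_eq_of_mem_Icc hJ (Ioo_subset_Icc_self hx)
    rw [doleansDade_eq_mul_exp hh hJ, hJ, ← integral_add_adjacent_intervals
      (intervalIntegrable_doleansDade hN hh a ha) hint, hI]
    linear_combination hP
  · obtain ⟨hint, hI⟩ := intervalIntegrable_and_integral_doleansDade_mul hh hum.le
      fun x hx => hJx x ⟨hx.1.le, hx.2⟩
    rw [doleansDade_eq_mul_exp_mul hh hN.finite_jumpTimes hum hJm, hJm,
      finsum_mem_insert _ (fun hm => hum.not_ge hm.2.1) (hN.finite_jumpTimes u),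
      leftLim_doleansDade hh hum fun x hx => hJx x ⟨hx.1.le, hx.2⟩,
      ← integral_add_adjacent_intervals (intervalIntegrable_doleansDade hN hh u hu) hint, hI]
    linear_combination hP

theorem solvesLRSDE_doleansDade (hN : N.IsCountingProcess)
    (hh : ∀ a b, IntervalIntegrable (fun s => (g s - 1) * lam s) volume a b) :
    SolvesLRSDE N g lam (doleansDade N g lam) :=
  ⟨continuousWithinAt_doleansDade hh hN.finite_jumpTimes, fun _ ht => hN.integrableOn_Ioc ht _,
    intervalIntegrable_doleansDade hN hh, fun t ht => by
      rw [hN.setIntegral_Ioc_eq_finsum ht]; exact doleansDade_eq_finsum hN hh t ht⟩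

namespace SolvesLRSDE

theorem intervalIntegrable (hR : SolvesLRSDE N g lam R) {a b : ℝ} (ha : 0 ≤ a) (hb : 0 ≤ b) :
    IntervalIntegrable (fun s => R s * (g s - 1) * lam s) volume a b :=
  (hR.2.2.1 a ha).symm.trans (hR.2.2.1 b hb)

theorem eq_finsum (hR : SolvesLRSDE N g lam R) (hN : N.IsCountingProcess) {t : ℝ} (ht : 0 ≤ t) :
    R t = 1 + ∑ᶠ s ∈ N.jumpTimes t, leftLim R s * (g s - 1) -
      ∫ s in (0:ℝ)..t, R s * (g s - 1) * lam s := by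
  rw [← hN.setIntegral_Ioc_eq_finsum ht]
  exact hR.2.2.2 t ht

theorem apply_zero (hR : SolvesLRSDE N g lam R) (hN : N.IsCountingProcess) : R 0 = 1 := by
  simpa [jumpTimes_zero] using hR.eq_finsum hN le_rfl

theorem eq_sub_integral_of_jumpTimes_eq (hR : SolvesLRSDE N g lam R) (hN : N.IsCountingProcess)
    {a x : ℝ} (ha : 0 ≤ a) (hax : a ≤ x) (hJ : N.jumpTimes x = N.jumpTimes a) :
    R x = R a - ∫ s in a..x, R s * (g s - 1) * lam s := by
  rw [hR.eq_finsum hN (ha.trans hax), hR.eq_finsum hN ha, hJ,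
    ← integral_interval_sub_left (hR.2.2.1 x (ha.trans hax)) (hR.2.2.1 a ha)]
  ring

theorem eq_mul_exp_of_jumpTimes_eq (hR : SolvesLRSDE N g lam R) (hN : N.IsCountingProcess)
    (hh : ∀ a b, IntervalIntegrable (fun s => (g s - 1) * lam s) volume a b) {a b : ℝ}
    (ha : 0 ≤ a) (hab : a ≤ b) (hJ : N.jumpTimes b = N.jumpTimes a) :
    R b = R a * Real.exp (-∫ s in a..b, (g s - 1) * lam s) := by
  refine eq_mul_exp_neg_integral_of_eq_sub_integral (hh a b) ?_ fun x hx => ?_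
  · simpa only [mul_assoc] using hR.intervalIntegrable ha (ha.trans hab)
  · rw [uIcc_of_le hab] at hx
    simpa only [mul_assoc] using
      hR.eq_sub_integral_of_jumpTimes_eq hN ha hx.1 (jumpTimes_eq_of_mem_Icc hJ hx)

theorem eq_mul_exp_mul_of_jump (hR : SolvesLRSDE N g lam R) (hN : N.IsCountingProcess)
    (hh : ∀ a b, IntervalIntegrable (fun s => (g s - 1) * lam s) volume a b) {u m : ℝ}
    (hu : 0 ≤ u) (hum : u < m) (hJx : ∀ x ∈ Ico u m, N.jumpTimes x = N.jumpTimes u)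
    (hJm : N.jumpTimes m = insert m (N.jumpTimes u)) :
    R m = R u * Real.exp (-∫ s in u..m, (g s - 1) * lam s) * g m := by
  have hexp : leftLim R m = R u * Real.exp (-∫ s in u..m, (g s - 1) * lam s) :=
    leftLim_eq_of_eqOn_Ioo hum
      (fun x hx => hR.eq_mul_exp_of_jumpTimes_eq hN hh hu hx.1.le (hJx x ⟨hx.1.le, hx.2⟩))
      ((continuous_primitive hh u).neg.rexp.const_mul _).continuousWithinAt
  have hcont : ContinuousOn (fun x => R u - ∫ s in u..x, R s * (g s - 1) * lam s) (uIcc u m) :=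
    continuousOn_const.sub <|
      continuousOn_primitive_interval' (hR.intervalIntegrable hu (hu.trans hum.le)) left_mem_uIcc
  have hsub : leftLim R m = R u - ∫ s in u..m, R s * (g s - 1) * lam s :=
    leftLim_eq_of_eqOn_Ioo hum
      (fun x hx => hR.eq_sub_integral_of_jumpTimes_eq hN hu hx.1.le (hJx x ⟨hx.1.le, hx.2⟩))
      ((hcont m right_mem_uIcc).mono (uIcc_of_le hum.le ▸ Ioo_subset_Icc_self))
  have hm : R m = R u + leftLim R m * (g m - 1) - ∫ s in u..m, R s * (g s - 1) * lam s := by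
    rw [hR.eq_finsum hN (hu.trans hum.le), hR.eq_finsum hN hu, hJm,
      finsum_mem_insert _ (fun hm => hum.not_ge hm.2.1) (hN.finite_jumpTimes u),
      ← integral_interval_sub_left (hR.2.2.1 m (hu.trans hum.le)) (hR.2.2.1 u hu)]
    ring
  rw [← hexp]
  linear_combination hm - hsub

theorem eqOn_Ici (hN : N.IsCountingProcess)
    (hh : ∀ a b, IntervalIntegrable (fun s => (g s - 1) * lam s) volume a b) {R₁ R₂ : ℝ → ℝ}
    (h₁ : SolvesLRSDE N g lam R₁) (h₂ : SolvesLRSDE N g lam R₂) : ∀ t, 0 ≤ t → R₁ t = R₂ t :=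
  jumpTimes_induction hN.finite_jumpTimes (by rw [h₁.apply_zero hN, h₂.apply_zero hN])
    (fun a b ha hab hJ hP => by
      rw [h₁.eq_mul_exp_of_jumpTimes_eq hN hh ha hab hJ,
        h₂.eq_mul_exp_of_jumpTimes_eq hN hh ha hab hJ, hP])
    (fun u m hu hum hJx hJm hP => by
      rw [h₁.eq_mul_exp_mul_of_jump hN hh hu hum hJx hJm,
        h₂.eq_mul_exp_mul_of_jump hN hh hu hum hJx hJm, hP])

end SolvesLRSDE

end LikelihoodRatio

theorem intervalIntegrable_sub_one_mul {g lam : ℝ → ℝ} (hg_bdd : ∃ C, ∀ s, |g s| ≤ C)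
    (hg_meas : Measurable g) (hlam_loc : LocallyIntegrable lam volume) (a b : ℝ) :
    IntervalIntegrable (fun s => (g s - 1) * lam s) volume a b := by
  obtain ⟨C, hC⟩ := hg_bdd
  refine IntegrableOn.intervalIntegrable ((hlam_loc.integrableOn_isCompact isCompact_uIcc).bdd_mul
    (c := C + 1) (hg_meas.sub_const 1).aestronglyMeasurable (ae_of_all _ fun s => ?_))
  rw [Real.norm_eq_abs]
  exact (abs_sub _ _).trans (by simpa using add_le_add_right (hC s) 1)

theorem stmt9_general (N : StieltjesFunction ℝ) (g lam : ℝ → ℝ)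
    -- N is a counting process with N(0) = 0, ℕ-valued, jumps of size 1,
    -- finitely many jumps on compacts
    (hN_nat : ∀ t, ∃ n : ℕ, N t = n)
    (hN_jump : ∀ t, N t - Function.leftLim N t ≤ 1)
    (hN_fin : ∀ t, {s : ℝ | 0 < s ∧ s ≤ t ∧ Function.leftLim N s < N s}.Finite)
    -- g is bounded and (as a deterministic function of time) predictable:
    -- left-continuous and measurable
    (hg_bdd : ∃ C, ∀ s, |g s| ≤ C)
    (hg_meas : Measurable g)
    -- λ is a locally integrable nonnegative intensity
    (hlam_loc : LocallyIntegrable lam volume) :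
    SolvesLRSDE N g lam (doleansDade N g lam) ∧
      ∀ R₁ R₂, SolvesLRSDE N g lam R₁ → SolvesLRSDE N g lam R₂ →
        ∀ t, 0 ≤ t → R₁ t = R₂ t := by
  have hN : N.IsCountingProcess := ⟨hN_nat, hN_jump, hN_fin⟩
  have hh := intervalIntegrable_sub_one_mul hg_bdd hg_meas hlam_loc
  exact ⟨solvesLRSDE_doleansDade hN hh, fun _ _ h₁ h₂ => SolvesLRSDE.eqOn_Ici hN hh h₁ h₂⟩

/-- The SDE `R(t) = 1 + ∫₀ᵗ R(s−)(g(s)−1) dM(s)`, with `M = N − ∫λ` the martingale of a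
counting process `N` with intensity `λ`, has a unique solution, given by the
Doléans-Dade stochastic exponential. -/
theorem stmt9 (N : StieltjesFunction ℝ) (g lam : ℝ → ℝ)
    -- N is a counting process with N(0) = 0, ℕ-valued, jumps of size 1,
    -- finitely many jumps on compacts
    (hN0 : N 0 = 0)
    (hN_nat : ∀ t, ∃ n : ℕ, N t = n)
    (hN_jump : ∀ t, N t - Function.leftLim N t ≤ 1)
    (hN_fin : ∀ t, {s : ℝ | 0 < s ∧ s ≤ t ∧ Function.leftLim N s < N s}.Finite)
    -- g is bounded and (as a deterministic function of time) predictable: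
    -- left-continuous and measurable
    (hg_bdd : ∃ C, ∀ s, |g s| ≤ C)
    (hg_meas : Measurable g)
    (hg_left : ∀ s, ContinuousWithinAt g (Set.Iic s) s)
    -- λ is a locally integrable nonnegative intensity
    (hlam_nonneg : ∀ s, 0 ≤ lam s)
    (hlam_loc : LocallyIntegrable lam volume) :
    SolvesLRSDE N g lam (doleansDade N g lam) ∧
      ∀ R₁ R₂, SolvesLRSDE N g lam R₁ → SolvesLRSDE N g lam R₂ →
        ∀ t, 0 ≤ t → R₁ t = R₂ t :=
  stmt9_general N g lam hN_nat hN_jump hN_fin hg_bdd hg_meas hlam_loc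
end
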